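/- arXiv:0807.3576 — 4 statements merged into one kernel-verified Lean document; each statement's English description precedes it below -/
import Mathlib

section
/- If n ∈ ℕ and f, g ∈ ℂ[X] satisfy f ∘ g = X^n, then there exist a linear polynomial ℓ ∈ ℂ[X] and a positive divisor d of n such that f = X^d ∘ ℓ and g = ℓ^{-1} ∘ X^{n/d}, where ℓ^{-1} denotes the compositional inverse of ℓ. -/
open Polynomial

lemma comp_right_cancel {g p q : ℂ[X]} (hg : 0 < g.natDegree)
    (h : p.comp g = q.comp g) : p = q := by
  by_contra hne
  have h0 : p - q ≠ 0 := sub_ne_zero.mpr hne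
  have : (p - q).comp g = 0 := by rw [sub_comp, h, sub_self]
  have hdeg : (p - q).natDegree * g.natDegree = 0 := by
    rw [← natDegree_comp, this, natDegree_zero]
  have hpq0 : (p - q).natDegree = 0 := by
    rcases Nat.mul_eq_zero.mp hdeg with h' | h'
    · exact h'
    · omega
  obtain ⟨a, ha⟩ := natDegree_eq_zero.mp hpq0
  rw [← ha, C_comp] at this
  rw [← ha, this] at h0
  simp at h0

/-- If `f ∘ g = Xⁿ` (with `n` a positive integer), then `f = X^d ∘ ℓ` and
`g = ℓ⁻¹ ∘ X^(n/d)` for some linear `ℓ ∈ ℂ[X]` (with compositional inverse `ℓ'`)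
and some positive divisor `d` of `n`. -/
theorem decomposition_of_power (n : ℕ) (hn : 0 < n) (f g : ℂ[X])
    (h : f.comp g = (X : ℂ[X]) ^ n) :
    ∃ (ℓ ℓ' : ℂ[X]) (d : ℕ), ℓ.degree = 1 ∧ ℓ.comp ℓ' = X ∧ ℓ'.comp ℓ = X ∧
      0 < d ∧ d ∣ n ∧ f = ((X : ℂ[X]) ^ d).comp ℓ ∧
      g = ℓ'.comp ((X : ℂ[X]) ^ (n / d)) := by
  set d := f.natDegree with hd
  set m := g.natDegree with hm
  have hnd : n = d * m := by
    have := natDegree_comp (p := f) (q := g)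
    rw [h, natDegree_X_pow] at this
    exact this
  have hd0 : 0 < d := by
    rcases Nat.eq_zero_or_pos d with h' | h'
    · rw [h', zero_mul] at hnd; omega
    · exact h'
  have hm0 : 0 < m := by
    rcases Nat.eq_zero_or_pos m with h' | h'
    · rw [h', mul_zero] at hnd; omega
    · exact h'
  have hf0 : f ≠ 0 := by
    intro h0
    rw [h0, natDegree_zero] at hd
    omega
  -- f has a root b
  obtain ⟨b, hb⟩ := Complex.exists_root (f := f) (by
    rw [degree_eq_natDegree hf0, ← hd]
    exact_mod_cast hd0)
  have hdvd : (g - C b) ∣ (X : ℂ[X]) ^ n := by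
    obtain ⟨q, hq⟩ := dvd_iff_isRoot.mpr hb
    refine ⟨q.comp g, ?_⟩
    rw [← h, hq, mul_comp, sub_comp, X_comp, C_comp]
  -- divisors of X^n are c * X^k
  obtain ⟨k, hk, hassoc⟩ := (dvd_prime_pow prime_X n).mp hdvd
  obtain ⟨u, hu⟩ := hassoc.symm
  obtain ⟨c, hc, hcu⟩ := isUnit_iff.mp u.isUnit
  have hc0 : c ≠ 0 := hc.ne_zero
  have hgb : g - C b = C c * X ^ k := by
    rw [← hu, hcu]; ring
  have hkm : k = m := by
    have : (g - C b).natDegree = m := by rw [natDegree_sub_C]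
    rw [hgb] at this
    rwa [natDegree_C_mul hc0, natDegree_X_pow] at this
  subst hkm
  have hg : g = C c * X ^ m + C b := by rw [← hgb]; ring
  -- define ℓ and ℓ'
  set ℓ' : ℂ[X] := C c * X + C b with hℓ'
  set ℓ : ℂ[X] := C c⁻¹ * (X - C b) with hℓ
  have hℓℓ' : ℓ.comp ℓ' = X := by
    have e : ℓ.comp ℓ' = C c⁻¹ * (C c * X + C b - C b) := by
      rw [hℓ, hℓ', mul_comp, sub_comp, C_comp, X_comp, C_comp]
    rw [e, add_sub_cancel_right, ← mul_assoc, ← C_mul, inv_mul_cancel₀ hc0, C_1, one_mul]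
  have hℓ'ℓ : ℓ'.comp ℓ = X := by
    have e : ℓ'.comp ℓ = C c * (C c⁻¹ * (X - C b)) + C b := by
      rw [hℓ, hℓ', add_comp, mul_comp, C_comp, X_comp, C_comp]
    rw [e, ← mul_assoc, ← C_mul, mul_inv_cancel₀ hc0, C_1, one_mul, sub_add_cancel]
  have hgℓ' : g = ℓ'.comp ((X : ℂ[X]) ^ m) := by
    rw [hℓ', add_comp, mul_comp, C_comp, C_comp, X_comp, hg]
  have hℓg : ℓ.comp g = (X : ℂ[X]) ^ m := by
    rw [hgℓ', ← comp_assoc, hℓℓ', X_comp]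
  have hf : f = ℓ ^ d := by
    apply comp_right_cancel (g := g) hm0
    rw [h, pow_comp, hℓg, ← pow_mul, hnd, Nat.mul_comm d m]
  refine ⟨ℓ, ℓ', d, ?_, hℓℓ', hℓ'ℓ, hd0, ⟨m, hnd⟩, ?_, ?_⟩
  · rw [hℓ, degree_C_mul (inv_ne_zero hc0), degree_X_sub_C]
  · rw [X_pow_comp, hf]
  · rw [hnd, Nat.mul_div_cancel_left m hd0, hgℓ']
end

section
/- Let f, g be nonconstant complex polynomials such that for some positive integers m, n the iterates satisfy f^{∘m} = g^{∘n}, and suppose also deg(f)^m = deg(g)^n. If x, y ∈ ℂ are such that the orbit O_f(x) = {x, f(x), f(f(x)), …} is infinite and O_f(x) ∩ O_g(y) is nonempty, then O_f(x) ∩ O_g(y) is infinite. -/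
open Polynomial

/-- The `k`-th compositional iterate of a polynomial, with `f^{∘0} = X`. -/
noncomputable def polyIter (f : ℂ[X]) : ℕ → ℂ[X]
  | 0 => X
  | k + 1 => f.comp (polyIter f k)

/-- The forward orbit of `z` under the polynomial map `h`. -/
def orbit (h : ℂ[X]) (z : ℂ) : Set ℂ :=
  Set.range fun k : ℕ => (fun w => h.eval w)^[k] z

lemma eval_polyIter (f : ℂ[X]) (k : ℕ) (w : ℂ) :
    (polyIter f k).eval w = (fun w => f.eval w)^[k] w := by
  induction k with
  | zero => simp [polyIter]
  | succ k ih => simp [polyIter, eval_comp, ih, Function.iterate_succ_apply']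

lemma range_finite_of_iter_eq {F : ℂ → ℂ} {x : ℂ} {i j : ℕ} (hij : i < j)
    (h : F^[i] x = F^[j] x) :
    (Set.range fun k : ℕ => F^[k] x).Finite := by
  apply Set.Finite.subset ((Set.finite_Iio j).image fun k => F^[k] x)
  rintro _ ⟨k, rfl⟩
  induction k using Nat.strong_induction_on with
  | _ k ih =>
    by_cases hk : k < j
    · exact ⟨k, hk, rfl⟩
    · push_neg at hk
      have hlt : k - j + i < k := by omega
      have heq : F^[k] x = F^[k - j + i] x := by
        have h1 : F^[k] x = F^[k - j] (F^[j] x) := by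
          rw [← Function.iterate_add_apply]
          congr 1
          omega
        rw [h1, ← h, ← Function.iterate_add_apply]
      show F^[k] x ∈ _
      rw [heq]
      exact ih _ hlt

/-- If nonconstant `f, g ∈ ℂ[X]` have a common iterate `f^{∘m} = g^{∘n}` with
`deg(f)^m = deg(g)^n`, and `O_f(x)` is infinite while `O_f(x) ∩ O_g(y)` is
nonempty, then `O_f(x) ∩ O_g(y)` is infinite. -/
theorem common_iterate_infinite_intersection (f g : ℂ[X])
    (hf : 0 < f.natDegree) (hg : 0 < g.natDegree)
    (m n : ℕ) (hm : 0 < m) (hn : 0 < n)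
    (hiter : polyIter f m = polyIter g n)
    (hdeg : f.natDegree ^ m = g.natDegree ^ n)
    (x y : ℂ) (hx : (orbit f x).Infinite)
    (hne : (orbit f x ∩ orbit g y).Nonempty) :
    (orbit f x ∩ orbit g y).Infinite := by
  set F : ℂ → ℂ := fun w => f.eval w with hF
  set G : ℂ → ℂ := fun w => g.eval w with hG
  obtain ⟨z, ⟨a, ha⟩, ⟨b, hb⟩⟩ := hne
  have ha' : F^[a] x = z := ha
  have hb' : G^[b] y = z := hb
  -- F^[m] = G^[n] as functions
  have hFG : ∀ w, F^[m] w = G^[n] w := by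
    intro w
    rw [← eval_polyIter, ← eval_polyIter, hiter]
  have hpow : ∀ k w, (F^[m])^[k] w = (G^[n])^[k] w := by
    intro k
    induction k with
    | zero => intro w; rfl
    | succ k ih =>
      intro w
      rw [Function.iterate_succ_apply', Function.iterate_succ_apply', ih, hFG]
  have hmul : ∀ k w, F^[m * k] w = G^[n * k] w := by
    intro k w
    rw [Function.iterate_mul, Function.iterate_mul]
    exact hpow k w
  -- injectivity of k ↦ F^[k] x
  have hinj : ∀ i j : ℕ, i < j → F^[i] x ≠ F^[j] x := by
    intro i j hij hEq
    exact hx (range_finite_of_iter_eq hij hEq)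
  -- the set of F^[m*k] z is contained in the intersection and is infinite
  have hsub : (Set.range fun k : ℕ => F^[m * k] z) ⊆ orbit f x ∩ orbit g y := by
    rintro _ ⟨k, rfl⟩
    constructor
    · refine ⟨m * k + a, ?_⟩
      show F^[m * k + a] x = F^[m * k] z
      rw [Function.iterate_add_apply, ha']
    · refine ⟨n * k + b, ?_⟩
      show G^[n * k + b] y = F^[m * k] z
      rw [Function.iterate_add_apply, hb', ← hmul]
  refine Set.Infinite.mono hsub ?_
  apply Set.infinite_range_of_injective
  intro k1 k2 hk
  have hk' : F^[m * k1] z = F^[m * k2] z := hk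
  rcases lt_trichotomy k1 k2 with h | h | h
  · exfalso
    apply hinj (m * k1 + a) (m * k2 + a) (by nlinarith)
    rw [Function.iterate_add_apply, Function.iterate_add_apply, ha', hk']
  · exact h
  · exfalso
    apply hinj (m * k2 + a) (m * k1 + a) (by nlinarith)
    rw [Function.iterate_add_apply, Function.iterate_add_apply, ha', hk']
end

section
/- Let f ∈ ℂ[X] with deg(f) = r > 1, let ℓ, ℓ̂ ∈ ℂ[X] be linear, and let n > 1 be an integer. If f^{∘n} = ℓ ∘ X^{r^n} ∘ ℓ̂, then there exists α ∈ ℂ* such that f = ℓ ∘ (αX^r) ∘ ℓ^{-1}. -/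
open Polynomial

lemma polyIter_succ (g : ℂ[X]) (k : ℕ) : polyIter g (k+1) = g.comp (polyIter g k) := rfl

lemma derivative_polyIter (g : ℂ[X]) (k : ℕ) :
    derivative (polyIter g (k+1))
      = derivative (polyIter g k) * (derivative g).comp (polyIter g k) := by
  rw [polyIter_succ, derivative_comp]

lemma derivative_polyIter_dvd (g : ℂ[X]) {m k : ℕ} (h : m ≤ k) :
    derivative (polyIter g m) ∣ derivative (polyIter g k) := by
  induction k, h using Nat.le_induction with
  | base => exact dvd_rfl
  | succ k hk ih => exact ih.trans (by rw [derivative_polyIter]; exact dvd_mul_right _ _)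

lemma eval_polyIter_fixed (g : ℂ[X]) {b : ℂ} (hb : g.eval b = b) (k : ℕ) :
    (polyIter g k).eval b = b := by
  induction k with
  | zero => simp [polyIter]
  | succ k ih => rw [polyIter_succ, eval_comp, ih, hb]

-- a polynomial dividing (X - C b)^m, with natDegree k, equals C c * (X - C b)^k
lemma eq_C_mul_pow_of_dvd {h : ℂ[X]} {b : ℂ} {m k : ℕ} (hd : h ∣ (X - C b) ^ m)
    (hk : h.natDegree = k) (h0 : h ≠ 0) :
    ∃ c : ℂ, c ≠ 0 ∧ h = C c * (X - C b) ^ k := by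
  obtain ⟨i, him, hassoc⟩ := (dvd_prime_pow (prime_X_sub_C b) m).mp hd
  obtain ⟨u, hu⟩ := hassoc
  obtain ⟨c, hc, hcu⟩ := Polynomial.isUnit_iff.mp u.isUnit
  rw [← hcu] at hu
  have hcne : c ≠ 0 := hc.ne_zero
  have hik : i = k := by
    have := congrArg natDegree hu
    rw [natDegree_mul_C hcne, hk, natDegree_pow, natDegree_X_sub_C, mul_one] at this
    exact this.symm
  subst hik
  refine ⟨c⁻¹, inv_ne_zero hcne, ?_⟩
  rw [← hu]
  rw [mul_comm h (C c), ← mul_assoc, ← C_mul, inv_mul_cancel₀ hcne, C_1, one_mul]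

lemma core (g w : ℂ[X]) (r n : ℕ) (hg : g.natDegree = r) (hr1 : 1 < r) (hn : 1 < n)
    (hw : w.degree = 1) (h : polyIter g n = w ^ (r ^ n)) :
    ∃ α : ℂ, α ≠ 0 ∧ g = C α * X ^ r := by
  set N := r ^ n with hNdef
  have hN2 : 1 < N := Nat.one_lt_pow (by omega) hr1
  have hp : w.coeff 1 ≠ 0 := coeff_ne_zero_of_eq_degree hw
  set p := w.coeff 1
  set q := w.coeff 0
  have hweq : w = C p * X + C q := eq_X_add_C_of_degree_le_one hw.le
  set b : ℂ := -q / p with hbdef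
  have hwb : w = C p * (X - C b) := by
    rw [hweq, mul_sub, ← C_mul]
    have : p * b = -q := by rw [hbdef]; field_simp
    rw [this, map_neg, sub_neg_eq_add]
  -- derivative of the iterate
  have hD : derivative (polyIter g n) = C (N * p ^ N) * (X - C b) ^ (N - 1) := by
    have hdw : derivative (C p * (X - C b)) = C p := by
      simp [derivative_sub]
    have he : (C ((N : ℂ) * p ^ N) : ℂ[X]) = C (N : ℂ) * C (p ^ (N - 1)) * C p := by
      rw [← C_mul, ← C_mul]
      congr 1
      rw [mul_assoc, ← pow_succ]
      congr 2
      omega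
    rw [h, derivative_pow, hwb, hdw, mul_pow, ← C_pow, he]
    ring
  have hunit : IsUnit (C (N * p ^ N : ℂ)) := by
    refine isUnit_C.mpr (IsUnit.mk0 _ ?_)
    exact mul_ne_zero (Nat.cast_ne_zero.mpr (by positivity)) (pow_ne_zero _ hp)
  -- g has positive natDegree
  have hgnd : 0 < g.natDegree := by omega
  have hdg0 : derivative g ≠ 0 := by
    intro hzero
    have := natDegree_eq_zero_of_derivative_eq_zero hzero
    omega
  have hdgnd : (derivative g).natDegree = r - 1 := by
    have := degree_derivative_eq g hgnd
    rw [hg] at this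
    exact natDegree_eq_of_degree_eq_some this
  -- derivative g divides the big derivative
  have hdvd1 : derivative g ∣ (X - C b) ^ (N - 1) := by
    have h1 : derivative g ∣ derivative (polyIter g n) := by
      have : derivative (polyIter g 1) = derivative g := by
        simp [polyIter, comp_X]
      rw [← this]
      exact derivative_polyIter_dvd g (by omega)
    rw [hD] at h1
    exact (hunit.dvd_mul_left).mp h1
  obtain ⟨c, hc, hdgeq⟩ := eq_C_mul_pow_of_dvd hdvd1 hdgnd hdg0
  -- second divisibility: (derivative g).comp g
  have hdvd2 : (g - C b) ^ (r - 1) ∣ (X - C b) ^ (N - 1) := by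
    have h2 : (derivative g).comp g ∣ derivative (polyIter g n) := by
      have hstep : (derivative g).comp g ∣ derivative (polyIter g 2) := by
        rw [derivative_polyIter]
        have : polyIter g 1 = g := by simp [polyIter, comp_X]
        rw [this]
        exact dvd_mul_left _ _
      exact hstep.trans (derivative_polyIter_dvd g hn)
    rw [hD, hdgeq] at h2
    simp only [mul_comp, C_comp, pow_comp, sub_comp, X_comp] at h2
    have h2'' : (g - C b) ^ (r - 1) ∣ C (↑N * p ^ N) * (X - C b) ^ (N - 1) :=
      (dvd_mul_right _ (C c)).trans (by rwa [mul_comm] at h2)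
    exact (hunit.dvd_mul_left).mp h2''
  have hsub : g - C b ∣ (X - C b) ^ (N - 1) :=
    (dvd_pow_self (g - C b) (by omega : r - 1 ≠ 0)).trans hdvd2
  have hgbnd : (g - C b).natDegree = r := by rw [natDegree_sub_C, hg]
  have hgb0 : g - C b ≠ 0 := by
    intro hz
    rw [hz, natDegree_zero] at hgbnd
    omega
  obtain ⟨a, ha, hga⟩ := eq_C_mul_pow_of_dvd hsub hgbnd hgb0
  have hgeq : g = C a * (X - C b) ^ r + C b := by rw [← hga]; ring
  have hfix : g.eval b = b := by
    rw [hgeq]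
    simp [zero_pow (show r ≠ 0 by omega)]
  have hb0 : b = 0 := by
    have h1 := eval_polyIter_fixed g hfix n
    rw [h, eval_pow] at h1
    have hwz : w.eval b = 0 := by rw [hwb]; simp
    rw [hwz, zero_pow (by omega : N ≠ 0)] at h1
    exact h1.symm
  refine ⟨a, ha, ?_⟩
  rw [hgeq, hb0]
  simp

lemma polyIter_conj (f l li : ℂ[X]) (h1 : l.comp li = X) (h2 : li.comp l = X) (k : ℕ) :
    polyIter (li.comp (f.comp l)) k = li.comp ((polyIter f k).comp l) := by
  induction k with
  | zero => simp [polyIter, h2]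
  | succ k ih =>
    rw [polyIter_succ, ih, polyIter_succ]
    rw [comp_assoc, comp_assoc, ← comp_assoc l li, h1, X_comp, comp_assoc]

/-- If `deg f = r > 1`, `n > 1`, and `f^{∘n} = ℓ ∘ X^{rⁿ} ∘ ℓ̂` with `ℓ, ℓ̂`
linear, then `f = ℓ ∘ (αX^r) ∘ ℓ⁻¹` for some `α ∈ ℂ*`. -/
theorem iterate_power_form (f ℓ ℓhat : ℂ[X]) (r n : ℕ)
    (hr : f.natDegree = r) (hr1 : 1 < r) (hn : 1 < n)
    (hℓ : ℓ.degree = 1) (hℓhat : ℓhat.degree = 1)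
    (h : polyIter f n = ℓ.comp ((((X : ℂ[X]) ^ (r ^ n))).comp ℓhat)) :
    ∃ (α : ℂ) (ℓinv : ℂ[X]), α ≠ 0 ∧ ℓ.comp ℓinv = X ∧ ℓinv.comp ℓ = X ∧
      f = ℓ.comp ((C α * (X : ℂ[X]) ^ r).comp ℓinv) := by
  have hu1 : ℓ.coeff 1 ≠ 0 := coeff_ne_zero_of_eq_degree hℓ
  set u := ℓ.coeff 1
  set v := ℓ.coeff 0
  have hleq : ℓ = C u * X + C v := eq_X_add_C_of_degree_le_one hℓ.le
  set li : ℂ[X] := C u⁻¹ * (X - C v) with hli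
  have h1 : ℓ.comp li = X := by
    rw [hleq]
    simp only [add_comp, mul_comp, C_comp, X_comp, hli]
    rw [← mul_assoc, ← C_mul, mul_inv_cancel₀ hu1, C_1, one_mul, sub_add_cancel]
  have h2 : li.comp ℓ = X := by
    rw [hli]
    simp only [mul_comp, C_comp, sub_comp, X_comp]
    rw [hleq, add_sub_cancel_right, ← mul_assoc, ← C_mul, inv_mul_cancel₀ hu1, C_1, one_mul]
  have hlnd : ℓ.natDegree = 1 := natDegree_eq_of_degree_eq_some hℓ
  have hlind : li.natDegree = 1 := by
    rw [hli, natDegree_C_mul (inv_ne_zero hu1), natDegree_X_sub_C]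
  set g := li.comp (f.comp ℓ) with hgdef
  have hgnd : g.natDegree = r := by
    rw [hgdef, natDegree_comp, natDegree_comp, hlind, hlnd, hr, one_mul, mul_one]
  set w := ℓhat.comp ℓ with hwdef
  have hwnd : w.natDegree = 1 := by
    rw [hwdef, natDegree_comp, natDegree_eq_of_degree_eq_some hℓhat, hlnd]
    norm_num
  have hw0 : w ≠ 0 := fun hz => by simp [hz] at hwnd
  have hwdeg : w.degree = 1 := by rw [degree_eq_natDegree hw0, hwnd]; rfl
  have hconj : polyIter g n = w ^ (r ^ n) := by
    rw [hgdef, polyIter_conj f ℓ li h1 h2, h]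
    rw [comp_assoc ℓ _ ℓ, ← comp_assoc li ℓ _, h2, X_comp, comp_assoc, X_pow_comp]
  obtain ⟨α, hα, hgα⟩ := core g w r n hgnd hr1 hn hwdeg hconj
  refine ⟨α, li, hα, h1, h2, ?_⟩
  rw [← hgα]
  conv_rhs => rw [hgdef]
  rw [comp_assoc li _ li, comp_assoc f ℓ li, h1, comp_X, ← comp_assoc ℓ li f, h1, X_comp]
end

section
/- Let T_n be the normalized Chebyshev polynomial and let x ∈ ℂ be written as x = x₀ + x₀^{-1} with x₀ ∈ ℂ*. If the orbit O_{T_r}(x) under f = T_r (r ≥ 2) is finite, then x₀ is a root of unity. -/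
open Polynomial

/-- The normalized Chebyshev polynomial `T_n`, characterized by
`T_n(X + X⁻¹) = X^n + X⁻ⁿ`. -/
noncomputable def chebT (n : ℕ) : ℂ[X] := Polynomial.dickson 1 (1 : ℂ) n

/-- If `x = x₀ + x₀⁻¹` with `x₀ ∈ ℂ*` and the orbit of `x` under `T_r`
(`r ≥ 2`) is finite, then `x₀` is a root of unity. -/
theorem chebyshev_finite_orbit_root_of_unity (r : ℕ) (hr : 2 ≤ r)
    (x₀ x : ℂ) (hx₀ : x₀ ≠ 0) (hx : x = x₀ + x₀⁻¹)
    (hfin : (orbit (chebT r) x).Finite) :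
    ∃ n : ℕ, 0 < n ∧ x₀ ^ n = 1 := by
  have key : ∀ k : ℕ, (fun w => (chebT r).eval w)^[k] x
      = x₀ ^ (r ^ k) + (x₀ ^ (r ^ k))⁻¹ := by
    intro k
    induction k with
    | zero => simp [hx]
    | succ k ih =>
      rw [Function.iterate_succ_apply', ih]
      have hne : x₀ ^ (r ^ k) ≠ 0 := pow_ne_zero _ hx₀
      have := Polynomial.dickson_one_one_eval_add_inv (R := ℂ)
        (x₀ ^ (r ^ k)) (x₀ ^ (r ^ k))⁻¹ (mul_inv_cancel₀ hne) r
      rw [chebT, this, ← pow_mul, ← pow_succ, inv_pow, ← pow_mul, ← pow_succ]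
  -- the map k ↦ iterate is not injective
  have hni : ¬ Function.Injective (fun k : ℕ => (fun w => (chebT r).eval w)^[k] x) := by
    intro hinj
    exact Set.infinite_range_of_injective hinj hfin
  rw [Function.not_injective_iff] at hni
  obtain ⟨j, k, heq, hjk⟩ := hni
  -- WLOG j < k
  wlog hlt : j < k generalizing j k
  · exact this k j heq.symm hjk.symm (by omega)
  simp only [key] at heq
  set a := x₀ ^ (r ^ j) with ha
  set b := x₀ ^ (r ^ k) with hb
  have hane : a ≠ 0 := pow_ne_zero _ hx₀
  have hbne : b ≠ 0 := pow_ne_zero _ hx₀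
  have : (a - b) * (1 - (a * b)⁻¹) = 0 := by
    field_simp
    field_simp at heq
    ring_nf
    ring_nf at heq
    linear_combination heq
  have hrk : r ^ j < r ^ k := Nat.pow_lt_pow_right (by omega) hlt
  rcases mul_eq_zero.mp this with h | h
  · have hab : a = b := sub_eq_zero.mp h
    refine ⟨r ^ k - r ^ j, by omega, ?_⟩
    have : x₀ ^ (r ^ k) = x₀ ^ (r ^ j) := hab.symm
    have := pow_sub₀ x₀ hx₀ (le_of_lt hrk)
    rw [this, ← hb, ← ha, hab, mul_inv_cancel₀ hbne]
  · have hab : a * b = 1 := by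
      have := sub_eq_zero.mp h
      have habne : a * b ≠ 0 := mul_ne_zero hane hbne
      field_simp at this
      exact this
    refine ⟨r ^ j + r ^ k, by positivity, ?_⟩
    rw [pow_add, ← ha, ← hb, hab]
end
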